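/- arXiv:1204.4431 — 5 statements merged into one kernel-verified Lean document; each statement's English description precedes it below -/
import Mathlib

section
/- If a function g from a finite set T satisfies |T| - |g(T)| ≥ k, then there exists a subset T' of T with |T'| = 2k and |g(T')| ≤ k. -/
/-!
Let `n_b` be the size of the fiber of `g` over `b ∈ g(T)`, so that `∑_b (n_b - 1) = |T| - |g(T)| ≥ k`.
At most `k` of the positive summands already add up to at least `k`; the union `S` of the
corresponding fibers therefore satisfies `|g(S)| ≤ k` and `|S| ≥ k + |g(S)|`. Cutting `S` down to
`2k` elements, or filling it up to `2k` elements of `T`, each new element adding at most one value,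
gives `T'`.
-/

open Finset

namespace Finset

variable {ι α β : Type*}

lemma exists_subset_card_le_le_sum (s : Finset ι) (f : ι → ℕ) {k : ℕ}
    (h : k ≤ ∑ i ∈ s, f i) : ∃ t ⊆ s, #t ≤ k ∧ k ≤ ∑ i ∈ t, f i := by
  set p := s.filter (f · ≠ 0)
  by_cases hp : #p ≤ k
  · exact ⟨p, filter_subset _ _, hp, by rwa [sum_filter_ne_zero]⟩
  · obtain ⟨t, htp, rfl⟩ := exists_subset_card_eq (le_of_not_ge hp)
    refine ⟨t, htp.trans (filter_subset _ _), le_rfl, ?_⟩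
    calc #t = ∑ _ ∈ t, 1 := card_eq_sum_ones t
      _ ≤ ∑ i ∈ t, f i := sum_le_sum fun i hi ↦
          Nat.one_le_iff_ne_zero.mpr (mem_filter.mp (htp hi)).2

lemma card_image_le_card_image_add_card_sdiff [DecidableEq α] [DecidableEq β]
    {S U : Finset α} (hSU : S ⊆ U) (g : α → β) : #(U.image g) ≤ #(S.image g) + #(U \ S) :=
  calc #(U.image g) = #(S.image g ∪ (U \ S).image g) := by
        rw [← image_union, union_sdiff_of_subset hSU]
    _ ≤ #(S.image g) + #((U \ S).image g) := card_union_le _ _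
    _ ≤ #(S.image g) + #(U \ S) := Nat.add_le_add_left card_image_le _

lemma exists_subset_card_eq_card_image_le [DecidableEq β] {S T : Finset α} {n : ℕ}
    (hST : S ⊆ T) (hn : n ≤ #T) (g : α → β) :
    ∃ T' ⊆ T, #T' = n ∧ #(T'.image g) ≤ #(S.image g) + (n - #S) := by
  classical
  by_cases hS : n ≤ #S
  · obtain ⟨T', hT'S, rfl⟩ := exists_subset_card_eq hS
    exact ⟨T', hT'S.trans hST, rfl, (card_le_card (image_subset_image hT'S)).trans le_self_add⟩
  · obtain ⟨T', hST', hT'T, rfl⟩ := exists_subsuperset_card_eq hST (by omega) hn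
    refine ⟨T', hT'T, rfl, ?_⟩
    rw [← card_sdiff_of_subset hST']
    exact card_image_le_card_image_add_card_sdiff hST' g

lemma image_filter_mem_eq_of_subset_image [DecidableEq β] {T : Finset α} {g : α → β}
    {B : Finset β} (hB : B ⊆ T.image g) : (T.filter (g · ∈ B)).image g = B := by
  ext b
  simp only [mem_image, mem_filter]
  constructor
  · rintro ⟨x, ⟨-, hx⟩, rfl⟩
    exact hx
  · intro hb
    obtain ⟨x, hx, rfl⟩ := mem_image.mp (hB hb)
    exact ⟨x, ⟨hx, hb⟩, rfl⟩

lemma exists_subset_card_image_le_of_le_card_sub_card_image [DecidableEq β] {T : Finset α}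
    (g : α → β) {k : ℕ} (h : k ≤ #T - #(T.image g)) :
    ∃ S ⊆ T, #(S.image g) ≤ k ∧ k + #(S.image g) ≤ #S := by
  set fiber : β → Finset α := fun b ↦ T.filter (g · = b)
  have hfiber : ∀ b ∈ T.image g, 1 ≤ #(fiber b) := fun b hb ↦ by
    obtain ⟨x, hx, rfl⟩ := mem_image.mp hb
    exact card_pos.mpr ⟨x, mem_filter.mpr ⟨hx, rfl⟩⟩
  have hexcess : k ≤ ∑ b ∈ T.image g, (#(fiber b) - 1) := by
    rwa [sum_tsub_distrib _ hfiber, ← card_eq_sum_card_image, ← card_eq_sum_ones]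
  obtain ⟨B, hB, hBk, hkB⟩ := exists_subset_card_le_le_sum _ _ hexcess
  set S := T.filter (g · ∈ B)
  have hS : #S = ∑ b ∈ B, #(fiber b) := by
    rw [card_eq_sum_card_fiberwise (s := S) (t := B) (f := g) fun x hx ↦ (mem_filter.mp hx).2]
    refine sum_congr rfl fun b hb ↦ congrArg card ?_
    rw [filter_filter]
    exact filter_congr fun x _ ↦ ⟨And.right, fun hx ↦ ⟨hx ▸ hb, hx⟩⟩
  have hsum : ∑ b ∈ B, (#(fiber b) - 1) + #B = ∑ b ∈ B, #(fiber b) := by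
    rw [card_eq_sum_ones, ← sum_add_distrib]
    exact sum_congr rfl fun b hb ↦ Nat.sub_add_cancel (hfiber b (hB hb))
  refine ⟨S, filter_subset _ _, ?_, ?_⟩ <;> rw [image_filter_mem_eq_of_subset_image hB] <;> omega

end Finset

theorem stmt_0_general {α β : Type*} [DecidableEq β]
    (k : ℕ) (T : Finset α) (g : α → β)
    (hT : 2 * k ≤ T.card)
    (h : k ≤ T.card - (T.image g).card) :
    ∃ T' ⊆ T, T'.card = 2 * k ∧ (T'.image g).card ≤ k := by
  obtain ⟨S, hST, hSk, hkS⟩ := exists_subset_card_image_le_of_le_card_sub_card_image g h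
  obtain ⟨T', hT'T, hT'card, hT'g⟩ := exists_subset_card_eq_card_image_le hST hT g
  exact ⟨T', hT'T, hT'card, by omega⟩

/-- If a function `g` on a finite set `T` with `|T| ≥ 2k` satisfies `|T| - |g(T)| ≥ k`,
then there exists a subset `T' ⊆ T` with `|T'| = 2k` and `|g(T')| ≤ k`. -/
theorem stmt_0 {α β : Type*} [DecidableEq α] [DecidableEq β]
    (k : ℕ) (hk : 1 ≤ k) (T : Finset α) (g : α → β)
    (hT : 2 * k ≤ T.card)
    (h : k ≤ T.card - (T.image g).card) :
    ∃ T' ⊆ T, T'.card = 2 * k ∧ (T'.image g).card ≤ k :=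
  stmt_0_general k T g hT h
end

section
/- A finite bipartite multigraph G on vertex sets each of size m, with edge set indexed by a key set S, admits an assignment of all but at most s keys to vertices such that each key x with edge (h₁(x), h₂(x)) is assigned to one of its two endpoints and no two keys share a vertex, if and only if ex(G) ≤ s. -/
namespace CuckooStash

variable {V E : Type*} [Fintype V] [DecidableEq V] [Fintype E] [DecidableEq E]

/-- Adjacency relation induced by the edges in `F` of a multigraph with endpoint map `ends`. -/
def adjOn (ends : E → V × V) (F : Finset E) (u v : V) : Prop :=
  ∃ e ∈ F, ends e = (u, v) ∨ ends e = (v, u)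

/-- The setoid whose classes are the connected components (isolated vertices form
    their own components). -/
def compSetoid (ends : E → V × V) (F : Finset E) : Setoid V :=
  Relation.EqvGen.setoid (adjOn ends F)

/-- The number of connected components (isolated vertices count as components). -/
noncomputable def zeta (ends : E → V × V) (F : Finset E) : ℕ :=
  Nat.card (Quotient (compSetoid ends F))

/-- The cyclomatic number `γ = m - n + ζ`. -/
noncomputable def gamma (ends : E → V × V) (F : Finset E) : ℕ :=
  F.card + zeta ends F - Fintype.card V

open Classical in
/-- The degree of a vertex (a self-loop counts twice). -/
noncomputable def deg (ends : E → V × V) (F : Finset E) (v : V) : ℕ :=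
  (F.filter (fun e => (ends e).1 = v)).card + (F.filter (fun e => (ends e).2 = v)).card

open Classical in
/-- The vertex set of the connected component of `v`. -/
noncomputable def compVerts (ends : E → V × V) (F : Finset E) (v : V) : Finset V :=
  Finset.univ.filter (fun u => Relation.EqvGen (adjOn ends F) v u)

open Classical in
/-- The edge set of the connected component of `v`. -/
noncomputable def compEdges (ends : E → V × V) (F : Finset E) (v : V) : Finset E :=
  F.filter (fun e => Relation.EqvGen (adjOn ends F) v (ends e).1)

/-- Every connected component is acyclic or unicyclic. -/
def GoodComponents (ends : E → V × V) (F : Finset E) : Prop :=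
  ∀ v, (compEdges ends F v).card ≤ (compVerts ends F v).card

/-- The excess: the minimum number of edges one has to remove from `F` so that all
    connected components of the remaining graph are acyclic or unicyclic. -/
noncomputable def excess (ends : E → V × V) (F : Finset E) : ℕ :=
  sInf {d : ℕ | ∃ F' ⊆ F, F'.card + d = F.card ∧ GoodComponents ends F'}

/-- The number of connected components that contain a cycle. -/
noncomputable def zetaCyc (ends : E → V × V) (F : Finset E) : ℕ :=
  Nat.card {c : Quotient (compSetoid ends F) //
    ∃ v, Quotient.mk (compSetoid ends F) v = c ∧
      (compVerts ends F v).card ≤ (compEdges ends F v).card}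

/-- A graph is acyclic iff every edge is a bridge. -/
def Acyclic (ends : E → V × V) (F : Finset E) : Prop :=
  ∀ e ∈ F, zeta ends (F.erase e) = zeta ends F + 1

/-- `e` is a cycle edge of `F`: removing it does not disconnect anything. -/
def CycleEdge (ends : E → V × V) (F : Finset E) (e : E) : Prop :=
  e ∈ F ∧ zeta ends (F.erase e) = zeta ends F

end CuckooStash

/-!
A storing assignment is an injection `f` from the stored keys into the vertices with `f x` an
endpoint of `x`; it maps the edges of each component into that component's vertices, so every
component has at most as many edges as vertices. Conversely, such an edge set satisfies Hall's
condition: inside one component `W`, growing a vertex set `X` to `W` along edges leaving `X` adds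
one vertex and at least one induced edge per step, so `X` induces at most
`#X + #E_W - #W ≤ #X` edges, and an arbitrary `X` splits along the components it meets. The
stash is the complement of a largest such edge set, of size the excess.
-/

namespace CuckooStash

open Finset

variable {V E : Type*} {ends : E → V × V} {F : Finset E}

lemma adjOn_symm {u w : V} (h : adjOn ends F u w) : adjOn ends F w u :=
  let ⟨e, he, hends⟩ := h
  ⟨e, he, hends.symm⟩

lemma eqvGen_adjOn_ends {e : E} (he : e ∈ F) :
    Relation.EqvGen (adjOn ends F) (ends e).1 (ends e).2 :=
  .rel _ _ ⟨e, he, .inl rfl⟩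

lemma exists_adjOn_of_eqvGen {X : Finset V} {a b : V}
    (hab : Relation.EqvGen (adjOn ends F) a b) (ha : a ∈ X) (hb : b ∉ X) :
    ∃ x ∈ X, ∃ y ∉ X, adjOn ends F x y := by
  by_contra! hcut
  have hclosed : Relation.EqvGen.setoid (adjOn ends F) ≤ Setoid.ker (· ∈ X) :=
    Setoid.eqvGen_le fun x y hxy => propext
      ⟨fun hx => by_contra fun hy => hcut x hx y hy hxy,
        fun hy => by_contra fun hx => hcut y hy x hx (adjOn_symm hxy)⟩
  exact hb ((hclosed hab).mp ha)

lemma mem_compVerts [Fintype V] {v u : V} :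
    u ∈ compVerts ends F v ↔ Relation.EqvGen (adjOn ends F) v u := by
  simp [compVerts]

lemma mem_compEdges {v : V} {e : E} :
    e ∈ compEdges ends F v ↔ e ∈ F ∧ Relation.EqvGen (adjOn ends F) v (ends e).1 := by
  simp [compEdges]

lemma fst_mem_compVerts_iff [Fintype V] {v : V} {e : E} (he : e ∈ F) :
    (ends e).1 ∈ compVerts ends F v ↔ (ends e).2 ∈ compVerts ends F v := by
  simp only [mem_compVerts]
  exact ⟨fun h => h.trans _ _ _ (eqvGen_adjOn_ends he),
    fun h => h.trans _ _ _ (eqvGen_adjOn_ends he).symm⟩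

def inducedEdges [DecidableEq V] (ends : E → V × V) (F : Finset E) (X : Finset V) : Finset E :=
  F.filter fun e => (ends e).1 ∈ X ∧ (ends e).2 ∈ X

lemma mem_inducedEdges [DecidableEq V] {X : Finset V} {e : E} :
    e ∈ inducedEdges ends F X ↔ e ∈ F ∧ (ends e).1 ∈ X ∧ (ends e).2 ∈ X :=
  mem_filter

variable [Fintype V] [DecidableEq V] [DecidableEq E]

lemma card_inducedEdges_add_card_compVerts_le {v : V} {X : Finset V}
    (hX : X ⊆ compVerts ends F v) (hne : X.Nonempty) :
    #(inducedEdges ends F X) + #(compVerts ends F v) ≤ #(compEdges ends F v) + #X := by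
  have hsub : ∀ {Y}, Y ⊆ compVerts ends F v → inducedEdges ends F Y ⊆ compEdges ends F v :=
    fun hY e he => by
      obtain ⟨heF, h1, -⟩ := mem_inducedEdges.1 he
      exact mem_compEdges.2 ⟨heF, mem_compVerts.1 (hY h1)⟩
  induction hk : #(compVerts ends F v \ X) generalizing X with
  | zero =>
    have hXW : X = compVerts ends F v :=
      hX.antisymm (sdiff_eq_empty_iff_subset.1 (card_eq_zero.1 hk))
    rw [hXW]
    have := card_le_card (hsub subset_rfl)
    omega
  | succ k ih =>
    obtain ⟨b, hb⟩ := card_pos.1 (by omega : 0 < #(compVerts ends F v \ X))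
    obtain ⟨a, ha⟩ := hne
    obtain ⟨hbW, hbX⟩ := mem_sdiff.1 hb
    have hab : Relation.EqvGen (adjOn ends F) a b :=
      (mem_compVerts.1 (hX ha)).symm.trans _ _ _ (mem_compVerts.1 hbW)
    obtain ⟨x, hx, y, hy, e, he, hends⟩ := exists_adjOn_of_eqvGen hab ha hbX
    have hyW : y ∈ compVerts ends F v :=
      mem_compVerts.2 ((mem_compVerts.1 (hX hx)).trans _ _ _ (.rel _ _ ⟨e, he, hends⟩))
    have hgrow := ih (X := insert y X) (insert_subset hyW hX) (insert_nonempty _ _) (by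
      rw [sdiff_insert, card_erase_of_mem (mem_sdiff.2 ⟨hyW, hy⟩), hk]; rfl)
    have hnew : insert e (inducedEdges ends F X) ⊆ inducedEdges ends F (insert y X) := by
      refine insert_subset ?_ fun f hf => ?_
      · rcases hends with h | h <;> simp [mem_inducedEdges, h, he, hx]
      · obtain ⟨hfF, h1, h2⟩ := mem_inducedEdges.1 hf
        exact mem_inducedEdges.2 ⟨hfF, mem_insert_of_mem h1, mem_insert_of_mem h2⟩
    have hold : e ∉ inducedEdges ends F X := by
      rcases hends with h | h <;> simp [mem_inducedEdges, h, hy]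
    have := card_le_card hnew
    rw [card_insert_of_notMem hold] at this
    rw [card_insert_of_notMem hy] at hgrow
    omega

lemma GoodComponents.card_inducedEdges_le (hF : GoodComponents ends F) (X : Finset V) :
    #(inducedEdges ends F X) ≤ #X := by
  induction X using Finset.strongInduction with
  | H X ih =>
  obtain rfl | ⟨x, hx⟩ := X.eq_empty_or_nonempty
  · simp [inducedEdges]
  have hsplit : inducedEdges ends F X ⊆ inducedEdges ends F (X ∩ compVerts ends F x) ∪
      inducedEdges ends F (X \ compVerts ends F x) := by
    intro e he
    obtain ⟨heF, h1, h2⟩ := mem_inducedEdges.1 he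
    by_cases hW : (ends e).1 ∈ compVerts ends F x
    · exact mem_union_left _ (mem_inducedEdges.2
        ⟨heF, mem_inter.2 ⟨h1, hW⟩, mem_inter.2 ⟨h2, (fst_mem_compVerts_iff heF).1 hW⟩⟩)
    · exact mem_union_right _ (mem_inducedEdges.2 ⟨heF, mem_sdiff.2 ⟨h1, hW⟩,
        mem_sdiff.2 ⟨h2, mt (fst_mem_compVerts_iff heF).2 hW⟩⟩)
  have hxW : x ∈ compVerts ends F x := mem_compVerts.2 (.refl x)
  have hcomp := card_inducedEdges_add_card_compVerts_le inter_subset_right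
    ⟨x, mem_inter.2 ⟨hx, hxW⟩⟩
  have hrest := ih (X \ compVerts ends F x) ((ssubset_iff_of_subset sdiff_subset).2
    ⟨x, hx, fun h => (mem_sdiff.1 h).2 hxW⟩)
  have := (card_le_card hsplit).trans (card_union_le _ _)
  have := card_inter_add_card_sdiff X (compVerts ends F x)
  have := hF x
  omega

theorem goodComponents_iff_exists_injOn :
    GoodComponents ends F ↔
      ∃ f : E → V, Set.InjOn f F ∧ ∀ e ∈ F, f e = (ends e).1 ∨ f e = (ends e).2 := by
  constructor
  · intro hF
    have hall (s : Finset F) : #s ≤ #(s.biUnion fun e => {(ends e).1, (ends e).2}) :=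
      calc #s = #(s.map (.subtype _)) := (card_map _).symm
        _ ≤ #(inducedEdges ends F (s.biUnion fun e => {(ends e).1, (ends e).2})) :=
          card_le_card fun e he => by
            obtain ⟨e, hes, rfl⟩ := mem_map.1 he
            exact mem_inducedEdges.2 ⟨e.2, mem_biUnion.2 ⟨e, hes, by simp⟩,
              mem_biUnion.2 ⟨e, hes, by simp⟩⟩
        _ ≤ _ := hF.card_inducedEdges_le _
    obtain ⟨g, hg, hgmem⟩ := (all_card_le_biUnion_card_iff_exists_injective _).1 hall
    classical
    refine ⟨fun e => if h : e ∈ F then g ⟨e, h⟩ else (ends e).1, fun x hx y hy hxy => ?_,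
      fun e he => by simpa [he] using hgmem ⟨e, he⟩⟩
    simp only [mem_coe] at hx hy
    exact congrArg Subtype.val (hg (by simpa [hx, hy] using hxy))
  · rintro ⟨f, hinj, hf⟩ v
    refine card_le_card_of_injOn f (fun e he => ?_) (hinj.mono fun e he => (mem_compEdges.1 he).1)
    obtain ⟨heF, hv⟩ := mem_compEdges.1 he
    rw [mem_coe, mem_compVerts]
    rcases hf e heF with h | h <;> rw [h]
    · exact hv
    · exact hv.trans _ _ _ (eqvGen_adjOn_ends heF)

lemma excess_le_iff {s : ℕ} :
    excess ends F ≤ s ↔ ∃ F' ⊆ F, #F ≤ #F' + s ∧ GoodComponents ends F' := by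
  let D := {d : ℕ | ∃ F' ⊆ F, #F' + d = #F ∧ GoodComponents ends F'}
  change sInf D ≤ s ↔ _
  have hne : D.Nonempty :=
    ⟨#F, ∅, empty_subset _, by simp,
      goodComponents_iff_exists_injOn.2 ⟨fun e => (ends e).1, by simp, by simp⟩⟩
  constructor
  · intro h
    obtain ⟨F', hsub, hcard, hgood⟩ := Nat.sInf_mem hne
    exact ⟨F', hsub, by omega, hgood⟩
  · rintro ⟨F', hsub, hcard, hgood⟩
    have hmem : #F - #F' ∈ D := ⟨F', hsub, Nat.add_sub_cancel' (card_le_card hsub), hgood⟩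
    exact (Nat.sInf_le hmem).trans (by omega)

end CuckooStash

open CuckooStash

/-- The keys of `S = Fin n` can be stored in the two tables (each a copy of `Fin m`)
with a stash of size `s`, i.e. all but at most `s` keys can be injectively assigned
to one of their two endpoints `h₁ x` (left table) or `h₂ x` (right table), if and
only if the excess of the cuckoo graph `G(S,h₁,h₂)` is at most `s`. -/
theorem stmt_7 (m n s : ℕ) (h₁ h₂ : Fin n → Fin m) :
    (∃ T : Finset (Fin n), T.card ≤ s ∧
        ∃ f : Fin n → Fin m ⊕ Fin m,
          (∀ x, x ∉ T → f x = Sum.inl (h₁ x) ∨ f x = Sum.inr (h₂ x)) ∧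
          Set.InjOn f {x | x ∉ T}) ↔
      excess (fun x : Fin n =>
          ((Sum.inl (h₁ x) : Fin m ⊕ Fin m), (Sum.inr (h₂ x) : Fin m ⊕ Fin m)))
        Finset.univ ≤ s := by
  rw [excess_le_iff]
  constructor
  · rintro ⟨T, hT, f, hf, hinj⟩
    refine ⟨Tᶜ, Finset.subset_univ _, ?_, goodComponents_iff_exists_injOn.2
      ⟨f, fun x hx y hy => hinj (Finset.mem_compl.1 hx) (Finset.mem_compl.1 hy),
        fun x hx => hf x (Finset.mem_compl.1 hx)⟩⟩
    have := Finset.card_compl_add_card T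
    simp only [Finset.card_univ]
    omega
  · rintro ⟨F', -, hcard, hgood⟩
    obtain ⟨f, hinj, hf⟩ := goodComponents_iff_exists_injOn.1 hgood
    refine ⟨F'ᶜ, ?_, f, fun x hx => hf x (Finset.notMem_compl.1 hx),
      fun x hx y hy => hinj (Finset.notMem_compl.1 hx) (Finset.notMem_compl.1 hy)⟩
    have := Finset.card_compl_add_card F'
    simp only [Finset.card_univ] at hcard
    omega
end

section
/- Every leafless connected graph with i marked edges has a leafless connected subgraph containing all i marked edges whose cyclomatic number is at most i + 1. -/
open CuckooStash

theorem Relation.ReflTransGen.exists_avoiding {α : Type*} {r : α → α → Prop} {p : α → Prop}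
    {a b : α} (h : Relation.ReflTransGen r a b) (ha : p a) :
    ∃ c, p c ∧ Relation.ReflTransGen (fun x y => r x y ∧ ¬ p y) c b := by
  induction h with
  | refl => exact ⟨a, ha, .refl⟩
  | @tail x y _ hxy ih =>
    by_cases hy : p y
    · exact ⟨y, hy, .refl⟩
    · obtain ⟨c, hc, hcx⟩ := ih
      exact ⟨c, hc, hcx.tail ⟨hxy, hy⟩⟩

open Finset in
theorem Finset.card_sub_card_insert_lt {α : Type*} [Fintype α] [DecidableEq α] {s : Finset α}
    {a : α} (ha : a ∉ s) : Fintype.card α - #(insert a s) < Fintype.card α - #s := by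
  have := card_lt_univ_of_notMem ha
  rw [card_insert_of_notMem ha]
  omega

namespace CuckooStash

open Finset Relation

variable {V E : Type*} {ends : E → V × V} {F F' : Finset E} {g : E} {a b x : V}

instance (F : Finset E) : Std.Symm (adjOn ends F) :=
  ⟨fun _ _ ⟨g, hg, h⟩ => ⟨g, hg, h.symm⟩⟩

theorem adjOn_mono (h : F ⊆ F') : adjOn ends F a b → adjOn ends F' a b :=
  fun ⟨g, hg, hab⟩ => ⟨g, h hg, hab⟩

variable (ends) in
def compMap (h : F ⊆ F') : Quotient (compSetoid ends F) → Quotient (compSetoid ends F') :=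
  Quotient.map id fun _ _ hab => hab.mono fun _ _ => adjOn_mono h

theorem compMap_surjective (h : F ⊆ F') : Function.Surjective (compMap ends h) :=
  Quotient.ind fun v => ⟨⟦v⟧, rfl⟩

theorem zeta_le_card [Fintype V] (F : Finset E) : zeta ends F ≤ Fintype.card V := by
  rw [zeta, ← Nat.card_eq_fintype_card]
  exact Nat.card_le_card_of_surjective _ Quotient.mk_surjective

theorem zeta_anti [Finite V] (h : F ⊆ F') : zeta ends F' ≤ zeta ends F :=
  Nat.card_le_card_of_surjective _ (compMap_surjective h)

theorem zeta_insert_lt [Finite V] [DecidableEq E] (hg : ends g = (a, b) ∨ ends g = (b, a))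
    (hab : ¬ EqvGen (adjOn ends F) a b) : zeta ends (insert g F) < zeta ends F := by
  have := Fintype.ofFinite (Quotient (compSetoid ends F))
  have := Fintype.ofFinite (Quotient (compSetoid ends (insert g F)))
  have hsub : F ⊆ insert g F := subset_insert g F
  have hmerge : compMap ends hsub ⟦a⟧ = compMap ends hsub ⟦b⟧ :=
    Quotient.sound (EqvGen.rel _ _ ⟨g, mem_insert_self g F, hg⟩)
  simpa only [zeta, Nat.card_eq_fintype_card] using
    Fintype.card_lt_of_surjective_not_injective _ (compMap_surjective hsub)
      fun hinj => hab (Quotient.exact (hinj hmerge))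

variable (ends) in
/-- `gamma ends F + Fintype.card V`, without the truncated subtraction of `gamma`. -/
noncomputable def shiftedGamma (F : Finset E) : ℕ :=
  F.card + zeta ends F

theorem shiftedGamma_insert_le [Finite V] [DecidableEq E] (g : E) (F : Finset E) :
    shiftedGamma ends (insert g F) ≤ shiftedGamma ends F + 1 := by
  have := zeta_anti (ends := ends) (subset_insert g F)
  have := card_insert_le g F
  unfold shiftedGamma
  omega

theorem shiftedGamma_insert_le_of_not_eqvGen [Finite V] [DecidableEq E] (hgF : g ∉ F)
    (hg : ends g = (a, b) ∨ ends g = (b, a)) (hab : ¬ EqvGen (adjOn ends F) a b) :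
    shiftedGamma ends (insert g F) ≤ shiftedGamma ends F := by
  have := zeta_insert_lt hg hab
  rw [shiftedGamma, shiftedGamma, card_insert_of_notMem hgF]
  omega

variable [DecidableEq V]

variable (ends) in
def incidence (g : E) (w : V) : ℕ :=
  (if (ends g).1 = w then 1 else 0) + (if (ends g).2 = w then 1 else 0)

theorem deg_eq_sum (F : Finset E) (w : V) : deg ends F w = ∑ g ∈ F, incidence ends g w := by
  rw [deg, card_filter, card_filter, ← sum_add_distrib]
  rfl

theorem deg_insert [DecidableEq E] (hgF : g ∉ F) (w : V) :
    deg ends (insert g F) w = deg ends F w + incidence ends g w := by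
  rw [deg_eq_sum, deg_eq_sum, sum_insert hgF, add_comm]

theorem deg_singleton (g : E) (w : V) : deg ends {g} w = incidence ends g w := by
  rw [deg_eq_sum, sum_singleton]

theorem deg_mono (h : F ⊆ F') (w : V) : deg ends F w ≤ deg ends F' w := by
  rw [deg_eq_sum, deg_eq_sum]
  exact sum_le_sum_of_subset h

theorem incidence_ne_zero_iff (hg : ends g = (a, b) ∨ ends g = (b, a)) :
    incidence ends g x ≠ 0 ↔ x = a ∨ x = b := by
  rcases hg with hg | hg <;> simp only [incidence, hg] <;> split_ifs <;> grind

theorem exists_ends_of_incidence_ne_zero (h : incidence ends g x ≠ 0) :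
    ∃ b, ends g = (x, b) ∨ ends g = (b, x) := by
  by_cases h1 : (ends g).1 = x
  · exact ⟨(ends g).2, .inl (Prod.ext h1 rfl)⟩
  · have h2 : (ends g).2 = x := by
      by_contra h2
      simp [incidence, h1, h2] at h
    exact ⟨(ends g).1, .inr (Prod.ext rfl h2)⟩

theorem deg_ne_zero_of_adjOn (h : adjOn ends F a b) : deg ends F a ≠ 0 := by
  obtain ⟨g, hg, hab⟩ := h
  rw [deg_eq_sum]
  exact (sum_pos' (fun _ _ => Nat.zero_le _)
    ⟨g, hg, Nat.pos_of_ne_zero ((incidence_ne_zero_iff hab).2 (Or.inl rfl))⟩).ne'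

theorem exists_notMem_incidence_ne_zero [Fintype E] (h : deg ends F x < deg ends univ x) :
    ∃ g ∉ F, incidence ends g x ≠ 0 := by
  by_contra! hc
  rw [deg_eq_sum, deg_eq_sum, ← sum_subset (subset_univ F) fun g _ hg => hc g hg] at h
  exact lt_irrefl _ h

theorem not_eqvGen_of_deg_eq_zero (hab : a ≠ b) (hb : deg ends F b = 0) :
    ¬ EqvGen (adjOn ends F) a b := by
  rw [EqvGen.eqvGen_eq_reflTransGen]
  intro h
  rcases h.cases_tail with h | ⟨c, -, hcb⟩
  · exact hab h.symm
  · exact deg_ne_zero_of_adjOn (Std.Symm.symm _ _ hcb) hb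

variable (ends) in
def ConnectedOnSupport (F : Finset E) : Prop :=
  ∀ u v, deg ends F u ≠ 0 → deg ends F v ≠ 0 → EqvGen (adjOn ends F) u v

theorem ConnectedOnSupport.of_forall_eqvGen (c : V)
    (h : ∀ x, deg ends F x ≠ 0 → EqvGen (adjOn ends F) x c) : ConnectedOnSupport ends F :=
  fun u v hu hv => (h u hu).trans _ _ _ ((h v hv).symm _ _)

theorem connectedOnSupport_singleton (g : E) : ConnectedOnSupport ends {g} := by
  refine .of_forall_eqvGen (ends g).1 fun x hx => ?_
  rw [deg_singleton, incidence_ne_zero_iff (ends := ends) (g := g) (Or.inl rfl)] at hx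
  rcases hx with rfl | rfl
  · exact .refl _
  · exact .rel _ _ ⟨g, mem_singleton_self g, Or.inr rfl⟩

theorem ConnectedOnSupport.insert [DecidableEq E] (hF : ConnectedOnSupport ends F) (hgF : g ∉ F)
    (hg : ends g = (a, b) ∨ ends g = (b, a)) (ha : deg ends F a ≠ 0) :
    ConnectedOnSupport ends (insert g F) := by
  refine .of_forall_eqvGen a fun x hx => ?_
  rw [deg_insert hgF] at hx
  by_cases hxF : deg ends F x = 0
  · rw [hxF, zero_add, incidence_ne_zero_iff hg] at hx
    rcases hx with rfl | rfl
    · exact .refl _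
    · exact .rel _ _ (Std.Symm.symm _ _ ⟨g, mem_insert_self g F, hg⟩)
  · exact (hF x a hxF ha).mono fun _ _ => adjOn_mono (subset_insert g F)

variable [Fintype V]

variable (ends) in
noncomputable def leaves (F : Finset E) : Finset V :=
  univ.filter fun x => deg ends F x = 1

variable [DecidableEq E]

theorem mem_leaves_insert (hgF : g ∉ F) (hg : ends g = (a, b) ∨ ends g = (b, a))
    (ha : deg ends F a ≠ 0) (hx : x ∈ leaves ends (insert g F)) :
    x ≠ a ∧ (x ∈ leaves ends F ∨ x = b ∧ deg ends F b = 0) := by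
  simp only [leaves, mem_filter, mem_univ, true_and, deg_insert hgF] at hx ⊢
  by_cases hinc : incidence ends g x = 0
  · refine ⟨?_, .inl (by omega)⟩
    rintro rfl
    exact (incidence_ne_zero_iff hg).2 (.inl rfl) hinc
  · rcases (incidence_ne_zero_iff hg).1 hinc with rfl | rfl
    · omega
    · by_cases hxa : x = a
      · subst hxa; omega
      · exact ⟨hxa, .inr ⟨rfl, by omega⟩⟩

theorem shiftedGamma_insert_add_card_leaves_le (hgF : g ∉ F)
    (hg : ends g = (a, b) ∨ ends g = (b, a)) (ha : deg ends F a ≠ 0) :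
    shiftedGamma ends (insert g F) + #(leaves ends (insert g F)) ≤
      shiftedGamma ends F + #((leaves ends F).erase a) + 1 := by
  by_cases hb : deg ends F b = 0
  · have hab : a ≠ b := fun h => ha (h ▸ hb)
    have hγ := shiftedGamma_insert_le_of_not_eqvGen hgF hg (not_eqvGen_of_deg_eq_zero hab hb)
    have hL : leaves ends (insert g F) ⊆ insert b ((leaves ends F).erase a) := fun x hx => by
      obtain ⟨hxa, hx | ⟨rfl, -⟩⟩ := mem_leaves_insert hgF hg ha hx
      · exact mem_insert_of_mem (mem_erase.2 ⟨hxa, hx⟩)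
      · exact mem_insert_self _ _
    have := (card_le_card hL).trans (card_insert_le _ _)
    omega
  · have hγ := shiftedGamma_insert_le (ends := ends) g F
    have hL : leaves ends (insert g F) ⊆ (leaves ends F).erase a := fun x hx => by
      obtain ⟨hxa, hx | ⟨rfl, hx0⟩⟩ := mem_leaves_insert hgF hg ha hx
      · exact mem_erase.2 ⟨hxa, hx⟩
      · exact absurd hx0 hb
    have := card_le_card hL
    omega

theorem shiftedGamma_singleton_add_card_leaves_le (g : E) :
    shiftedGamma ends {g} + #(leaves ends {g}) ≤ Fintype.card V + 2 := by
  by_cases hloop : (ends g).1 = (ends g).2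
  · have hL : leaves ends {g} = ∅ := by
      refine eq_empty_of_forall_notMem fun x hx => ?_
      simp only [leaves, mem_filter, mem_univ, true_and, deg_singleton, incidence, hloop] at hx
      split_ifs at hx <;> omega
    have := zeta_le_card (ends := ends) {g}
    rw [hL, shiftedGamma, card_singleton, card_empty]
    omega
  · have hγ := shiftedGamma_insert_le_of_not_eqvGen (ends := ends) (notMem_empty g)
      (Or.inl rfl) (not_eqvGen_of_deg_eq_zero hloop (by simp [deg_eq_sum]))
    have hL : leaves ends {g} ⊆ {(ends g).1, (ends g).2} := fun x hx => by
      simp only [leaves, mem_filter, mem_univ, true_and, deg_singleton] at hx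
      rcases (incidence_ne_zero_iff (ends := ends) (g := g) (Or.inl rfl)).1
        (by omega : incidence ends g x ≠ 0) with rfl | rfl <;> simp
    have := (card_le_card hL).trans card_le_two
    have := zeta_le_card (ends := ends) ∅
    rw [insert_empty, shiftedGamma, shiftedGamma, card_empty] at hγ
    rw [shiftedGamma]
    omega

variable [Fintype E]

theorem exists_leafless_superset {F : Finset E} (hG : ∀ v, deg ends univ v ≠ 1)
    (hF : ConnectedOnSupport ends F) :
    ∃ F', F ⊆ F' ∧ ConnectedOnSupport ends F' ∧ (∀ v, deg ends F' v ≠ 1) ∧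
      shiftedGamma ends F' ≤ shiftedGamma ends F + #(leaves ends F) := by
  by_cases hL : leaves ends F = ∅
  · refine ⟨F, subset_rfl, hF, fun v hv => ?_, by omega⟩
    exact eq_empty_iff_forall_notMem.1 hL v (by simpa [leaves] using hv)
  obtain ⟨x, hx⟩ := nonempty_iff_ne_empty.2 hL
  have hx1 : deg ends F x = 1 := by simpa [leaves] using hx
  obtain ⟨g, hgF, hgx⟩ := exists_notMem_incidence_ne_zero
    (lt_of_le_of_ne (hx1 ▸ deg_mono (subset_univ F) x) (hx1 ▸ (hG x).symm))
  obtain ⟨b, hg⟩ := exists_ends_of_incidence_ne_zero hgx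
  have hψ := shiftedGamma_insert_add_card_leaves_le hgF hg (by omega)
  obtain ⟨F', hsub, hF', hleaf, hγ⟩ := exists_leafless_superset hG (hF.insert hgF hg (by omega))
  refine ⟨F', (subset_insert g F).trans hsub, hF', hleaf, ?_⟩
  have := card_erase_add_one hx
  omega
termination_by Fintype.card E - #F
decreasing_by exact card_sub_card_insert_lt hgF

theorem exists_superset_reaching {F : Finset E} {t w : V} (hF : ConnectedOnSupport ends F)
    (ht : deg ends F t ≠ 0)
    (hw : ReflTransGen (fun x y => adjOn ends univ x y ∧ deg ends F y = 0) t w) :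
    ∃ F', F ⊆ F' ∧ ConnectedOnSupport ends F' ∧ deg ends F' w ≠ 0 ∧
      shiftedGamma ends F' ≤ shiftedGamma ends F ∧
      leaves ends F' ⊆ insert w ((leaves ends F).erase t) := by
  rcases hw.cases_head with rfl | ⟨c, ⟨⟨g, -, hg⟩, hc⟩, hcw⟩
  · exact ⟨F, subset_rfl, hF, ht, le_rfl, insert_erase_subset _ _⟩
  have hgF : g ∉ F := fun hgF => deg_ne_zero_of_adjOn (F := F)
    (Std.Symm.symm _ _ ⟨g, hgF, hg⟩) hc
  have htc : t ≠ c := fun h => ht (h ▸ hc)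
  have hc₁ : deg ends (insert g F) c ≠ 0 := by
    have := (incidence_ne_zero_iff hg).2 (.inr rfl)
    rw [deg_insert hgF]
    omega
  -- cutting the walk at its last visit to `c` keeps it inside the isolated vertices of `insert g F`
  obtain ⟨_, hc', hcw⟩ := hcw.exists_avoiding (p := (· = c)) rfl
  rw [hc'] at hcw
  have hcw₁ : ReflTransGen (fun x y => adjOn ends univ x y ∧ deg ends (insert g F) y = 0) c w :=
    ReflTransGen.mono (fun x y ⟨⟨hxy, hy⟩, hyc⟩ => ⟨hxy, by
      rw [deg_insert hgF, hy, zero_add]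
      by_contra hinc
      rcases (incidence_ne_zero_iff hg).1 hinc with rfl | rfl
      exacts [ht hy, hyc rfl]⟩) _ _ hcw
  obtain ⟨F', hsub, hF', hw', hγ, hL⟩ := exists_superset_reaching (hF.insert hgF hg ht) hc₁ hcw₁
  refine ⟨F', (subset_insert g F).trans hsub, hF', hw',
    hγ.trans (shiftedGamma_insert_le_of_not_eqvGen hgF hg (not_eqvGen_of_deg_eq_zero htc hc)),
    hL.trans (insert_subset_insert _ fun x hx => ?_)⟩
  obtain ⟨hxc, hx⟩ := mem_erase.1 hx
  obtain ⟨hxt, hx | ⟨rfl, -⟩⟩ := mem_leaves_insert hgF hg ht hx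
  exacts [mem_erase.2 ⟨hxt, hx⟩, absurd rfl hxc]
termination_by Fintype.card E - #F
decreasing_by exact card_sub_card_insert_lt hgF

theorem exists_superset_insert
    (hconn : ∀ u v, deg ends univ u ≠ 0 → deg ends univ v ≠ 0 → EqvGen (adjOn ends univ) u v)
    (hG : ∀ v, deg ends univ v ≠ 1) (hF : ConnectedOnSupport ends F) (hFl : ∀ v, deg ends F v ≠ 1)
    (hne : F.Nonempty) (e : E) :
    ∃ F', insert e F ⊆ F' ∧ ConnectedOnSupport ends F' ∧ (∀ v, deg ends F' v ≠ 1) ∧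
      shiftedGamma ends F' ≤ shiftedGamma ends F + 1 := by
  obtain ⟨f, hf⟩ := hne
  obtain ⟨s, hs⟩ : ∃ s, deg ends F s ≠ 0 :=
    ⟨_, deg_ne_zero_of_adjOn (b := (ends f).2) ⟨f, hf, .inl rfl⟩⟩
  have he : ends e = ((ends e).1, (ends e).2) ∨ ends e = ((ends e).2, (ends e).1) := .inl rfl
  set u := (ends e).1
  have hsu : ReflTransGen (adjOn ends univ) s u := by
    rw [← EqvGen.eqvGen_eq_reflTransGen]
    exact hconn s u (fun h => hs (Nat.eq_zero_of_le_zero (h ▸ deg_mono (subset_univ F) s)))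
      (deg_ne_zero_of_adjOn ⟨e, mem_univ e, he⟩)
  obtain ⟨t, ht, htu⟩ := hsu.exists_avoiding (p := (deg ends F · ≠ 0)) hs
  obtain ⟨Fu, hFFu, hFu, hu, hγu, hLeaves⟩ := exists_superset_reaching hF ht
    (ReflTransGen.mono (fun _ _ ⟨hxy, hy⟩ => ⟨hxy, not_not.1 hy⟩) _ _ htu)
  have hLu : leaves ends Fu ⊆ {u} := by
    have : leaves ends F = ∅ := filter_false_of_mem fun v _ => hFl v
    simpa [this] using hLeaves
  obtain ⟨F₁, heF₁, hF₁, hψ⟩ : ∃ F₁, insert e Fu ⊆ F₁ ∧ ConnectedOnSupport ends F₁ ∧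
      shiftedGamma ends F₁ + #(leaves ends F₁) ≤ shiftedGamma ends F + 1 := by
    by_cases heFu : e ∈ Fu
    · refine ⟨Fu, insert_subset heFu subset_rfl, hFu, ?_⟩
      have := card_le_card hLu
      rw [card_singleton] at this
      omega
    · have := shiftedGamma_insert_add_card_leaves_le heFu he hu
      have := card_le_card (erase_subset_erase u hLu)
      rw [erase_singleton, card_empty] at this
      exact ⟨insert e Fu, subset_rfl, hFu.insert heFu he hu, by omega⟩
  obtain ⟨F', hF₁F', hF', hF'l, hγ⟩ := exists_leafless_superset hG hF₁
  exact ⟨F', (insert_subset_insert e hFFu).trans (heF₁.trans hF₁F'), hF', hF'l, by omega⟩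

theorem exists_superset_of_marked
    (hconn : ∀ u v, deg ends univ u ≠ 0 → deg ends univ v ≠ 0 → EqvGen (adjOn ends univ) u v)
    (hG : ∀ v, deg ends univ v ≠ 1) (M : Finset E) :
    ∃ F, M ⊆ F ∧ ConnectedOnSupport ends F ∧ (∀ v, deg ends F v ≠ 1) ∧
      shiftedGamma ends F ≤ Fintype.card V + #M + 1 := by
  induction M using Finset.induction_on with
  | empty =>
    refine ⟨∅, subset_rfl, fun u _ hu => absurd (by simp [deg_eq_sum]) hu,
      fun v => by simp [deg_eq_sum], ?_⟩
    have := zeta_le_card (ends := ends) ∅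
    rw [shiftedGamma, card_empty]
    omega
  | @insert e M heM ih =>
    obtain ⟨F, hMF, hF, hFl, hγ⟩ := ih
    obtain ⟨F', heF', hF', hF'l, hγ'⟩ : ∃ F', insert e F ⊆ F' ∧ ConnectedOnSupport ends F' ∧
        (∀ v, deg ends F' v ≠ 1) ∧ shiftedGamma ends F' ≤ Fintype.card V + #M + 2 := by
      rcases F.eq_empty_or_nonempty with rfl | hne
      · obtain ⟨F', hsub, hF', hF'l, hγ'⟩ :=
          exists_leafless_superset hG (connectedOnSupport_singleton (ends := ends) e)
        have := shiftedGamma_singleton_add_card_leaves_le (ends := ends) e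
        exact ⟨F', hsub, hF', hF'l, by omega⟩
      · obtain ⟨F', hsub, hF', hF'l, hγ'⟩ := exists_superset_insert hconn hG hF hFl hne e
        exact ⟨F', hsub, hF', hF'l, by omega⟩
    refine ⟨F', (insert_subset_insert e hMF).trans heF', hF', hF'l, ?_⟩
    rw [card_insert_of_notMem heM]
    omega

end CuckooStash

/-- Every leafless connected multigraph with `i` marked edges `M` has a leafless
connected subgraph containing all marked edges whose cyclomatic number is at most
`i + 1`. -/
theorem stmt_10 {V E : Type*} [Fintype V] [DecidableEq V] [Fintype E] [DecidableEq E]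
    (ends : E → V × V)
    (hconn : ∀ u v : V, deg ends Finset.univ u ≠ 0 → deg ends Finset.univ v ≠ 0 →
      Relation.EqvGen (adjOn ends Finset.univ) u v)
    (hleafless : ∀ v, deg ends Finset.univ v ≠ 1)
    (M : Finset E) (i : ℕ) (hM : M.card = i) :
    ∃ F' : Finset E, M ⊆ F' ∧
      (∀ u v : V, deg ends F' u ≠ 0 → deg ends F' v ≠ 0 →
        Relation.EqvGen (adjOn ends F') u v) ∧
      (∀ v, deg ends F' v ≠ 1) ∧
      gamma ends F' ≤ i + 1 := by
  obtain ⟨F, hMF, hF, hFl, hγ⟩ := exists_superset_of_marked hconn hleafless M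
  refine ⟨F, hMF, hF, hFl, ?_⟩
  rw [shiftedGamma] at hγ
  rw [gamma]
  omega
end

section
/- If N(t, ℓ, γ, 1) = t^{O(ℓ+γ)} denotes the number of non-isomorphic connected multigraphs with t edges, ℓ of which are leaf edges, and cyclomatic number γ, then for ζ components one has N(t, ℓ, γ, ζ) ≤ N(t+ζ-1, ℓ, γ, 1) · (t-ℓ+ζ-1)^{ζ-1}. -/
namespace CuckooStash

open Classical

/-- A multigraph with `t` edges, represented by its endpoint map into `Fin (2t)`
(enough vertices for any multigraph with `t` edges and no isolated vertices;
isolated vertices are ignored throughout). -/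
abbrev MG (t : ℕ) := Fin t → Fin (2 * t) × Fin (2 * t)

/-- Isomorphism of multigraphs: a permutation of the vertices, a permutation of the
edges, and an orientation flip of each edge, transforming one endpoint map into the
other. -/
def isoRel (t : ℕ) (g₁ g₂ : MG t) : Prop :=
  ∃ (π : Equiv.Perm (Fin (2 * t))) (σ : Equiv.Perm (Fin t)) (flip : Fin t → Bool),
    ∀ e, g₂ (σ e) =
      if flip e then (π (g₁ e).2, π (g₁ e).1) else (π (g₁ e).1, π (g₁ e).2)

/-- The number of leaf edges (edges incident with a vertex of degree 1). -/
noncomputable def leafEdgeCount (t : ℕ) (g : MG t) : ℕ :=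
  (Finset.univ.filter (fun e : Fin t =>
    deg g Finset.univ (g e).1 = 1 ∨ deg g Finset.univ (g e).2 = 1)).card

/-- The number of non-isolated vertices. -/
noncomputable def nonIsoVerts (t : ℕ) (g : MG t) : ℕ :=
  (Finset.univ.filter (fun v => deg g Finset.univ v ≠ 0)).card

/-- The number of connected components containing at least one edge. -/
noncomputable def zetaEdge (t : ℕ) (g : MG t) : ℕ :=
  Nat.card {c : Quotient (compSetoid g Finset.univ) //
    ∃ v, Quotient.mk (compSetoid g Finset.univ) v = c ∧ deg g Finset.univ v ≠ 0}

/-- The cyclomatic number `γ = m - n + ζ` (isolated vertices ignored). -/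
noncomputable def gammaNI (t : ℕ) (g : MG t) : ℕ :=
  t + zetaEdge t g - nonIsoVerts t g

/-- `g` has `t` edges, exactly `l` of which are leaf edges, cyclomatic number `γ`,
and exactly `ζ` connected components (each containing at least one edge). -/
def GraphParams (t l γ ζ : ℕ) (g : MG t) : Prop :=
  leafEdgeCount t g = l ∧ gammaNI t g = γ ∧ zetaEdge t g = ζ

/-- `N t l γ ζ`: the number of non-isomorphic multigraphs with `ζ` connected
components and cyclomatic number `γ` that have `t` edges, `l` of which are
leaf edges. -/
noncomputable def N (t l γ ζ : ℕ) : ℕ :=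
  Nat.card (Quotient (Relation.EqvGen.setoid
    (fun g₁ g₂ : {g : MG t // GraphParams t l γ ζ g} => isoRel t g₁.1 g₂.1)))

end CuckooStash

open CuckooStash

/-!
Let `g` have `z + 1` components. Choose in each component a vertex of maximum degree and join the
representatives of `z` of the components to that of the remaining one by `z` new edges. The
result is connected and has the same cyclomatic number (`z` more edges, `z` fewer components,
the same vertices). It also has the same leaf edges: the new edges join non-isolated vertices, so
they are not leaves, and a new edge touches a vertex of degree one only when that vertex has
maximum degree in its component, i.e. the component is a single edge, whose other end stays a leaf.
Hence `g` is determined up to isomorphism by the class of a connected graph with `t + z` edges and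
`l` leaf edges together with a sequence of `z` of its `t + z - l` non-leaf edges.
-/

theorem Set.InjOn.exists_perm_extend {α : Type*} [Fintype α] {s : Set α} {f : α → α}
    (hf : Set.InjOn f s) : ∃ π : Equiv.Perm α, ∀ x ∈ s, π x = f x := by
  obtain ⟨π, hπ⟩ := Set.MapsTo.exists_equiv_extend_of_card_eq (t := Finset.univ) (by simp)
    (fun x _ => Finset.mem_coe.2 (Finset.mem_univ (f x))) hf
  exact ⟨π.trans (Equiv.subtypeUnivEquiv Finset.mem_univ), hπ⟩

theorem Nat.card_quotient_le_of_forall_exists {α β : Type*} [Finite β] (s : Setoid α)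
    (P : β → α → Prop) (hP : ∀ a, ∃ b, P b a) (hrel : ∀ b a₁ a₂, P b a₁ → P b a₂ → s a₁ a₂) :
    Nat.card (Quotient s) ≤ Nat.card β := by
  choose f hf using hP
  refine Nat.card_le_card_of_injective (fun q => f q.out) fun q₁ q₂ h => ?_
  have h' : f q₁.out = f q₂.out := h
  exact Quotient.out_equiv_out.1 (hrel _ _ _ (hf _) (h' ▸ hf _))

namespace CuckooStash

open Finset Function

section Multigraph

variable {V W E : Type*}

lemma deg_univ_eq_sum [DecidableEq V] [Fintype E] (ends : E → V × V) (v : V) :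
    deg ends univ v =
      ∑ e, ((if (ends e).1 = v then 1 else 0) + if (ends e).2 = v then 1 else 0) := by
  simp only [deg, card_filter, sum_add_distrib]

lemma deg_ne_zero_iff [DecidableEq V] {ends : E → V × V} {F : Finset E} {v : V} :
    deg ends F v ≠ 0 ↔ ∃ e ∈ F, (ends e).1 = v ∨ (ends e).2 = v := by
  simp only [deg, ne_eq, Nat.add_eq_zero_iff, card_eq_zero, filter_eq_empty_iff,
    not_and_or, not_forall, not_not, exists_prop]
  constructor
  · rintro (⟨e, he, h⟩ | ⟨e, he, h⟩)
    exacts [⟨e, he, .inl h⟩, ⟨e, he, .inr h⟩]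
  · rintro ⟨e, he, h | h⟩
    exacts [.inl ⟨e, he, h⟩, .inr ⟨e, he, h⟩]

lemma two_le_deg_of_loop [DecidableEq V] {ends : E → V × V} {F : Finset E} {e : E} {v : V}
    (he : e ∈ F) (hloop : ends e = (v, v)) : 2 ≤ deg ends F v := by
  have h₁ : 0 < (F.filter fun e => (ends e).1 = v).card :=
    card_pos.2 ⟨e, mem_filter.2 ⟨he, by rw [hloop]⟩⟩
  have h₂ : 0 < (F.filter fun e => (ends e).2 = v).card :=
    card_pos.2 ⟨e, mem_filter.2 ⟨he, by rw [hloop]⟩⟩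
  unfold deg
  convert Nat.add_le_add h₁ h₂

lemma deg_comp_prodMap [DecidableEq V] [DecidableEq W] {f : V → W} (hf : Injective f)
    (ends : E → V × V) (F : Finset E) (v : V) :
    deg (Prod.map f f ∘ ends) F (f v) = deg ends F v := by
  simp [deg, hf.eq_iff]

lemma deg_append [DecidableEq V] {m n : ℕ} (ends₁ : Fin m → V × V) (ends₂ : Fin n → V × V)
    (v : V) : deg (Fin.append ends₁ ends₂) univ v = deg ends₁ univ v + deg ends₂ univ v := by
  simp only [deg, card_filter, Fin.sum_univ_add, Fin.append_left, Fin.append_right]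
  ring

lemma eqvGen_adjOn_prodMap {f : V → W} {ends : E → V × V} {F : Finset E} {x y : V}
    (h : Relation.EqvGen (adjOn ends F) x y) :
    Relation.EqvGen (adjOn (Prod.map f f ∘ ends) F) (f x) (f y) := by
  induction h with
  | rel x y hxy =>
    obtain ⟨e, he, h | h⟩ := hxy <;> refine .rel _ _ ⟨e, he, ?_⟩ <;> simp [h]
  | refl => exact .refl _
  | symm _ _ _ ih => exact .symm _ _ ih
  | trans _ _ _ _ _ ih₁ ih₂ => exact .trans _ _ _ ih₁ ih₂

lemma eqvGen_adjOn_append_left {m n : ℕ} {ends₁ : Fin m → V × V} {ends₂ : Fin n → V × V}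
    {x y : V} (h : Relation.EqvGen (adjOn ends₁ univ) x y) :
    Relation.EqvGen (adjOn (Fin.append ends₁ ends₂) univ) x y :=
  Relation.EqvGen.mono (fun _ _ ⟨e, _, he⟩ => ⟨Fin.castAdd n e, mem_univ _, by simpa using he⟩)
    _ _ h

end Multigraph

section SubgraphIso

variable {V₁ V₂ V₃ E₁ E₂ E₃ : Type*}

def incidentVerts (ends : E₁ → V₁ × V₁) (F : Set E₁) : Set V₁ :=
  {v | ∃ e ∈ F, (ends e).1 = v ∨ (ends e).2 = v}

def SubgraphIso (ends₁ : E₁ → V₁ × V₁) (F₁ : Set E₁) (ends₂ : E₂ → V₂ × V₂) (F₂ : Set E₂) :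
    Prop :=
  ∃ (η : E₁ → E₂) (ρ : V₁ → V₂), Set.BijOn η F₁ F₂ ∧ Set.InjOn ρ (incidentVerts ends₁ F₁) ∧
    ∀ e ∈ F₁, ends₂ (η e) = (ρ (ends₁ e).1, ρ (ends₁ e).2) ∨
      ends₂ (η e) = (ρ (ends₁ e).2, ρ (ends₁ e).1)

lemma image_incidentVerts {ends₁ : E₁ → V₁ × V₁} {F₁ : Set E₁} {ends₂ : E₂ → V₂ × V₂}
    {F₂ : Set E₂} {η : E₁ → E₂} {ρ : V₁ → V₂} (hη : Set.BijOn η F₁ F₂)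
    (hends : ∀ e ∈ F₁, ends₂ (η e) = (ρ (ends₁ e).1, ρ (ends₁ e).2) ∨
      ends₂ (η e) = (ρ (ends₁ e).2, ρ (ends₁ e).1)) :
    ρ '' incidentVerts ends₁ F₁ = incidentVerts ends₂ F₂ := by
  ext w
  constructor
  · rintro ⟨v, ⟨e, he, hv⟩, rfl⟩
    refine ⟨η e, hη.mapsTo he, ?_⟩
    rcases hends e he with h | h <;> rw [h] <;> rcases hv with rfl | rfl <;> simp
  · rintro ⟨f, hf, hw⟩
    obtain ⟨e, he, rfl⟩ := hη.surjOn hf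
    rcases hends e he with h | h <;> rw [h] at hw <;> rcases hw with hw | hw <;>
      first
        | exact ⟨(ends₁ e).1, ⟨e, he, .inl rfl⟩, hw⟩
        | exact ⟨(ends₁ e).2, ⟨e, he, .inr rfl⟩, hw⟩

lemma SubgraphIso.trans {ends₁ : E₁ → V₁ × V₁} {F₁ : Set E₁} {ends₂ : E₂ → V₂ × V₂}
    {F₂ : Set E₂} {ends₃ : E₃ → V₃ × V₃} {F₃ : Set E₃} (h₁₂ : SubgraphIso ends₁ F₁ ends₂ F₂)
    (h₂₃ : SubgraphIso ends₂ F₂ ends₃ F₃) : SubgraphIso ends₁ F₁ ends₃ F₃ := by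
  obtain ⟨η₁, ρ₁, hη₁, hρ₁, hends₁⟩ := h₁₂
  obtain ⟨η₂, ρ₂, hη₂, hρ₂, hends₂⟩ := h₂₃
  have hmaps : Set.MapsTo ρ₁ (incidentVerts ends₁ F₁) (incidentVerts ends₂ F₂) := by
    rw [← image_incidentVerts hη₁ hends₁]
    exact Set.mapsTo_image _ _
  refine ⟨η₂ ∘ η₁, ρ₂ ∘ ρ₁, hη₂.comp hη₁, hρ₂.comp hρ₁ hmaps, fun e he => ?_⟩
  rcases hends₁ e he with h₁ | h₁ <;> rcases hends₂ (η₁ e) (hη₁.mapsTo he) with h₂ | h₂ <;>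
    simp [h₁, h₂]

lemma SubgraphIso.symm [Nonempty E₁] [Nonempty V₁] {ends₁ : E₁ → V₁ × V₁} {F₁ : Set E₁}
    {ends₂ : E₂ → V₂ × V₂} {F₂ : Set E₂} (h : SubgraphIso ends₁ F₁ ends₂ F₂) :
    SubgraphIso ends₂ F₂ ends₁ F₁ := by
  obtain ⟨η, ρ, hη, hρ, hends⟩ := h
  set I := incidentVerts ends₁ F₁
  refine ⟨invFunOn η F₁, invFunOn ρ I, hη.symm hη.invOn_invFunOn.symm, ?_, fun f hf => ?_⟩
  · rw [← image_incidentVerts hη hends]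
    exact invFunOn_injOn_image ρ I
  obtain ⟨e, he, rfl⟩ := hη.surjOn hf
  have hinv : ∀ v ∈ I, invFunOn ρ I (ρ v) = v := fun v hv => hρ.leftInvOn_invFunOn hv
  have h₁ := hinv _ ⟨e, he, .inl rfl⟩
  have h₂ := hinv _ ⟨e, he, .inr rfl⟩
  rw [hη.injOn.leftInvOn_invFunOn he]
  rcases hends e he with h | h <;> rw [h]
  · exact .inl (by simp [h₁, h₂])
  · exact .inr (by simp [h₁, h₂])

end SubgraphIso

section Isomorphism

variable {t : ℕ}

def IsLeafEdge (g : MG t) (e : Fin t) : Prop :=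
  deg g univ (g e).1 = 1 ∨ deg g univ (g e).2 = 1

lemma isoRel_equivalence (t : ℕ) : Equivalence (isoRel t) where
  refl g := ⟨1, 1, fun _ => false, fun e => by simp⟩
  symm := by
    rintro g₁ g₂ ⟨π, σ, flip, hiso⟩
    refine ⟨π⁻¹, σ⁻¹, fun e => flip (σ⁻¹ e), fun e => ?_⟩
    obtain ⟨e, rfl⟩ := σ.surjective e
    rw [hiso e, show σ⁻¹ (σ e) = e from σ.symm_apply_apply e]
    cases h : flip e <;> simp [h]
  trans := by
    rintro g₁ g₂ g₃ ⟨π₁, σ₁, flip₁, hiso₁⟩ ⟨π₂, σ₂, flip₂, hiso₂⟩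
    refine ⟨π₁.trans π₂, σ₁.trans σ₂, fun e => xor (flip₁ e) (flip₂ (σ₁ e)), fun e => ?_⟩
    rw [Equiv.trans_apply, hiso₂, hiso₁]
    cases h₁ : flip₁ e <;> cases h₂ : flip₂ (σ₁ e) <;> simp [h₁, h₂]

lemma deg_apply_eq_of_iso {g₁ g₂ : MG t} {π : Equiv.Perm (Fin (2 * t))}
    {σ : Equiv.Perm (Fin t)} {flip : Fin t → Bool}
    (hiso : ∀ e, g₂ (σ e) =
      if flip e then (π (g₁ e).2, π (g₁ e).1) else (π (g₁ e).1, π (g₁ e).2))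
    (v : Fin (2 * t)) : deg g₂ univ (π v) = deg g₁ univ v := by
  rw [deg_univ_eq_sum, deg_univ_eq_sum, ← Equiv.sum_comp σ]
  refine sum_congr rfl fun e _ => ?_
  rw [hiso e]
  cases flip e <;> simp [π.injective.eq_iff, add_comm]

lemma exists_perm_of_isoRel {g₁ g₂ : MG t} (h : isoRel t g₁ g₂) :
    ∃ σ : Equiv.Perm (Fin t), (∀ F, SubgraphIso g₁ F g₂ (σ '' F)) ∧
      ∀ e, IsLeafEdge g₂ (σ e) ↔ IsLeafEdge g₁ e := by
  obtain ⟨π, σ, flip, hiso⟩ := h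
  refine ⟨σ, fun F => ⟨σ, π, σ.injective.injOn.bijOn_image, π.injective.injOn, fun e _ => ?_⟩,
    fun e => ?_⟩
  · rw [hiso e]
    cases flip e <;> simp
  · unfold IsLeafEdge
    rw [hiso e]
    cases flip e <;> simp [deg_apply_eq_of_iso hiso, or_comm]

lemma isoRel_of_subgraphIso_univ {g₁ g₂ : MG t} (h : SubgraphIso g₁ Set.univ g₂ Set.univ) :
    isoRel t g₁ g₂ := by
  obtain ⟨η, ρ, hη, hρ, hends⟩ := h
  obtain ⟨π, hπ⟩ := hρ.exists_perm_extend
  refine ⟨π, Equiv.ofBijective η (Set.bijOn_univ.1 hη),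
    fun e => decide (g₂ (η e) ≠ (ρ (g₁ e).1, ρ (g₁ e).2)), fun e => ?_⟩
  rw [Equiv.ofBijective_apply, hπ _ ⟨e, trivial, .inl rfl⟩, hπ _ ⟨e, trivial, .inr rfl⟩]
  by_cases hsame : g₂ (η e) = (ρ (g₁ e).1, ρ (g₁ e).2)
  · simp [hsame]
  · simpa [hsame] using (hends e trivial).resolve_left hsame

end Isomorphism

section AddEdges

variable {t z : ℕ}

def liftVert (z : ℕ) (v : Fin (2 * t)) : Fin (2 * (t + z)) :=
  Fin.castLE (by omega) v

lemma liftVert_injective : Injective (liftVert (t := t) z) :=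
  fun _ _ h => Fin.castLE_inj.1 h

def addEdges (g : MG t) (new : Fin z → Fin (2 * t) × Fin (2 * t)) : MG (t + z) :=
  Prod.map (liftVert z) (liftVert z) ∘ Fin.append g new

variable {g : MG t} {new : Fin z → Fin (2 * t) × Fin (2 * t)}

@[simp]
lemma addEdges_castAdd (e : Fin t) :
    addEdges g new (Fin.castAdd z e) = (liftVert z (g e).1, liftVert z (g e).2) := by
  simp only [addEdges, comp_apply, Fin.append_left]
  rfl

@[simp]
lemma addEdges_natAdd (i : Fin z) :
    addEdges g new (Fin.natAdd t i) = (liftVert z (new i).1, liftVert z (new i).2) := by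
  simp only [addEdges, comp_apply, Fin.append_right]
  rfl

lemma deg_addEdges_liftVert (v : Fin (2 * t)) :
    deg (addEdges g new) univ (liftVert z v) = deg g univ v + deg new univ v := by
  rw [addEdges, deg_comp_prodMap liftVert_injective, deg_append]

lemma exists_liftVert_of_deg_addEdges_ne_zero {w : Fin (2 * (t + z))}
    (hw : deg (addEdges g new) univ w ≠ 0) : ∃ v, liftVert z v = w := by
  obtain ⟨e, -, h | h⟩ := deg_ne_zero_iff.1 hw <;> exact ⟨_, h⟩

lemma deg_addEdges_liftVert_ne_zero_iff (hnew : ∀ v, deg new univ v ≠ 0 → deg g univ v ≠ 0)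
    {v : Fin (2 * t)} :
    deg (addEdges g new) univ (liftVert z v) ≠ 0 ↔ deg g univ v ≠ 0 := by
  rw [deg_addEdges_liftVert]
  have := hnew v
  omega

lemma nonIsoVerts_addEdges (hnew : ∀ v, deg new univ v ≠ 0 → deg g univ v ≠ 0) :
    nonIsoVerts (t + z) (addEdges g new) = nonIsoVerts t g := by
  have himage : univ.filter (fun w => deg (addEdges g new) univ w ≠ 0) =
      (univ.filter fun v => deg g univ v ≠ 0).map ⟨liftVert z, liftVert_injective⟩ := by
    ext w
    simp only [mem_filter, mem_univ, true_and, mem_map, Embedding.coeFn_mk]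
    constructor
    · intro hw
      obtain ⟨v, rfl⟩ := exists_liftVert_of_deg_addEdges_ne_zero hw
      exact ⟨v, (deg_addEdges_liftVert_ne_zero_iff hnew).1 hw, rfl⟩
    · rintro ⟨v, hv, rfl⟩
      exact (deg_addEdges_liftVert_ne_zero_iff hnew).2 hv
  rw [nonIsoVerts, nonIsoVerts, himage, card_map]

lemma not_isLeafEdge_addEdges_natAdd (hnew : ∀ v, deg new univ v ≠ 0 → deg g univ v ≠ 0)
    (i : Fin z) :
    ¬ IsLeafEdge (addEdges g new) (Fin.natAdd t i) := by
  have hend : ∀ x, (new i).1 = x ∨ (new i).2 = x →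
      deg (addEdges g new) univ (liftVert z x) ≠ 1 := by
    intro x hx
    have hx' : deg new univ x ≠ 0 := deg_ne_zero_iff.2 ⟨i, mem_univ _, hx⟩
    have := hnew x hx'
    rw [deg_addEdges_liftVert]
    omega
  simp only [IsLeafEdge, addEdges_natAdd]
  exact not_or.2 ⟨hend _ (.inl rfl), hend _ (.inr rfl)⟩

lemma isLeafEdge_addEdges_castAdd_iff
    (hleaf : ∀ e, IsLeafEdge g e →
      (deg g univ (g e).1 = 1 ∧ deg new univ (g e).1 = 0) ∨
        (deg g univ (g e).2 = 1 ∧ deg new univ (g e).2 = 0)) (e : Fin t) :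
    IsLeafEdge (addEdges g new) (Fin.castAdd z e) ↔ IsLeafEdge g e := by
  have h₁ : deg g univ (g e).1 ≠ 0 := deg_ne_zero_iff.2 ⟨e, mem_univ _, .inl rfl⟩
  have h₂ : deg g univ (g e).2 ≠ 0 := deg_ne_zero_iff.2 ⟨e, mem_univ _, .inr rfl⟩
  simp only [IsLeafEdge, addEdges_castAdd, deg_addEdges_liftVert]
  constructor
  · omega
  · intro he
    rcases hleaf e he with h | h <;> omega

lemma leafEdgeCount_addEdges (hnew : ∀ v, deg new univ v ≠ 0 → deg g univ v ≠ 0)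
    (hleaf : ∀ e, IsLeafEdge g e →
      (deg g univ (g e).1 = 1 ∧ deg new univ (g e).1 = 0) ∨
        (deg g univ (g e).2 = 1 ∧ deg new univ (g e).2 = 0)) :
    leafEdgeCount (t + z) (addEdges g new) = leafEdgeCount t g := by
  rw [leafEdgeCount, leafEdgeCount, card_filter, card_filter, Fin.sum_univ_add]
  have hold := isLeafEdge_addEdges_castAdd_iff hleaf
  have hnew' := not_isLeafEdge_addEdges_natAdd hnew
  simp only [IsLeafEdge] at hold hnew'
  simp only [hold, hnew', if_false, sum_const_zero, add_zero]

lemma subgraphIso_addEdges :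
    SubgraphIso g Set.univ (addEdges g new) (Set.range (Fin.natAdd t))ᶜ := by
  refine ⟨Fin.castAdd z, liftVert z, ⟨?_, (Fin.castAdd_injective _ _).injOn, ?_⟩,
    liftVert_injective.injOn, fun e _ => .inl (addEdges_castAdd e)⟩
  · rintro e - ⟨i, hi⟩
    have := congrArg Fin.val hi
    simp only [Fin.val_natAdd, Fin.val_castAdd] at this
    omega
  · intro f hf
    induction f using Fin.addCases with
    | left e => exact ⟨e, trivial, rfl⟩
    | right i => exact absurd ⟨i, rfl⟩ hf

lemma eqvGen_adjOn_addEdges {x y : Fin (2 * t)} (h : Relation.EqvGen (adjOn g univ) x y) :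
    Relation.EqvGen (adjOn (addEdges g new) univ) (liftVert z x) (liftVert z y) :=
  eqvGen_adjOn_prodMap (eqvGen_adjOn_append_left h)

lemma adjOn_addEdges_natAdd (i : Fin z) :
    adjOn (addEdges g new) univ (liftVert z (new i).1) (liftVert z (new i).2) :=
  ⟨Fin.natAdd t i, mem_univ _, .inl (addEdges_natAdd i)⟩

end AddEdges

section Components

variable {V E : Type*} [DecidableEq V] [Fintype E]

abbrev EdgeComponent (ends : E → V × V) : Type _ :=
  {c : Quotient (compSetoid ends univ) //
    ∃ v, Quotient.mk (compSetoid ends univ) v = c ∧ deg ends univ v ≠ 0}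

lemma zetaEdge_eq_card {t : ℕ} (g : MG t) : zetaEdge t g = Nat.card (EdgeComponent g) := rfl

lemma exists_deg_ne_zero_of_zetaEdge_ne_zero {t : ℕ} {g : MG t} (h : zetaEdge t g ≠ 0) :
    ∃ v, deg g univ v ≠ 0 := by
  obtain ⟨c⟩ := Nat.card_ne_zero.1 h |>.1
  obtain ⟨v, -, hv⟩ := c.2
  exact ⟨v, hv⟩

lemma pos_of_zetaEdge_ne_zero {t : ℕ} {g : MG t} (h : zetaEdge t g ≠ 0) : 0 < t := by
  obtain ⟨v, hv⟩ := exists_deg_ne_zero_of_zetaEdge_ne_zero h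
  obtain ⟨e, -⟩ := deg_ne_zero_iff.1 hv
  exact e.pos

lemma zetaEdge_eq_one {t : ℕ} {g : MG t} (r : Fin (2 * t))
    (hr : ∀ w, deg g univ w ≠ 0 → Relation.EqvGen (adjOn g univ) w r)
    (hne : ∃ w, deg g univ w ≠ 0) : zetaEdge t g = 1 := by
  rw [zetaEdge_eq_card, Nat.card_eq_one_iff_unique]
  obtain ⟨w, hw⟩ := hne
  refine ⟨⟨?_⟩, ⟨⟨_, w, rfl, hw⟩⟩⟩
  rintro ⟨-, v₁, rfl, hv₁⟩ ⟨-, v₂, rfl, hv₂⟩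
  exact Subtype.ext (Quotient.sound ((hr v₁ hv₁).trans _ _ _ ((hr v₂ hv₂).symm _ _)))

def IsMaxDegRep (ends : E → V × V) (rep : EdgeComponent ends → V) : Prop :=
  ∀ c, Quotient.mk _ (rep c) = c.1 ∧
    ∀ w, Quotient.mk _ w = c.1 → deg ends univ w ≤ deg ends univ (rep c)

lemma exists_isMaxDegRep [Fintype V] (ends : E → V × V) : ∃ rep, IsMaxDegRep ends rep := by
  classical
  have hmax (c : EdgeComponent ends) : ∃ v, Quotient.mk _ v = c.1 ∧
      ∀ w, Quotient.mk _ w = c.1 → deg ends univ w ≤ deg ends univ v := by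
    obtain ⟨v₀, hv₀, -⟩ := c.2
    obtain ⟨v, hv, hmax⟩ := exists_max_image (univ.filter fun w => Quotient.mk _ w = c.1)
      (deg ends univ) ⟨v₀, by simpa using hv₀⟩
    exact ⟨v, by simpa using hv, fun w hw => hmax w (by simpa using hw)⟩
  choose rep hrep using hmax
  exact ⟨rep, hrep⟩

variable {ends : E → V × V} {rep : EdgeComponent ends → V}

lemma IsMaxDegRep.deg_ne_zero (hrep : IsMaxDegRep ends rep) (c : EdgeComponent ends) :
    deg ends univ (rep c) ≠ 0 := by
  obtain ⟨v, hv, hv₀⟩ := c.2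
  have := (hrep c).2 v hv
  omega

/-- Degree one at a vertex of maximum degree means that the component is the single edge
from `rep c` to `y`. -/
lemma IsMaxDegRep.deg_eq_one_of_adjOn (hrep : IsMaxDegRep ends rep) {c : EdgeComponent ends}
    {y : V} (hxy : adjOn ends univ (rep c) y) (hx : deg ends univ (rep c) = 1) :
    deg ends univ y = 1 ∧ ∀ c', rep c' ≠ y := by
  have hne : rep c ≠ y := by
    rintro hxy'
    obtain ⟨e, he, h | h⟩ := hxy <;>
    · have := two_le_deg_of_loop (ends := ends) (v := rep c) he (by rw [h, hxy'])
      omega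
  have hy : Quotient.mk (compSetoid ends univ) y = c.1 :=
    (Quotient.sound (Relation.EqvGen.symm _ _ (.rel _ _ hxy))).trans (hrep c).1
  have hy₀ : deg ends univ y ≠ 0 := by
    obtain ⟨e, he, h | h⟩ := hxy
    exacts [deg_ne_zero_iff.2 ⟨e, he, .inr (by rw [h])⟩,
      deg_ne_zero_iff.2 ⟨e, he, .inl (by rw [h])⟩]
  refine ⟨by have := (hrep c).2 y hy; omega, fun c' hc' => hne ?_⟩
  rw [← hc', show c' = c from Subtype.ext (by rw [← (hrep c').1, hc', hy])]

end Components

section Joining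

variable {t z : ℕ} {g : MG t}

def starEdges (rep : EdgeComponent g → Fin (2 * t)) (c : Fin (z + 1) ≃ EdgeComponent g) :
    Fin z → Fin (2 * t) × Fin (2 * t) :=
  fun i => (rep (c i.succ), rep (c 0))

variable {rep : EdgeComponent g → Fin (2 * t)} {c : Fin (z + 1) ≃ EdgeComponent g}

lemma exists_rep_of_deg_starEdges_ne_zero {v : Fin (2 * t)}
    (hv : deg (starEdges rep c) univ v ≠ 0) : ∃ c', rep c' = v := by
  obtain ⟨i, -, h | h⟩ := deg_ne_zero_iff.1 hv <;> exact ⟨_, h⟩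

lemma deg_ne_zero_of_deg_starEdges_ne_zero (hrep : IsMaxDegRep g rep) {v : Fin (2 * t)}
    (hv : deg (starEdges rep c) univ v ≠ 0) : deg g univ v ≠ 0 := by
  obtain ⟨c', rfl⟩ := exists_rep_of_deg_starEdges_ne_zero hv
  exact hrep.deg_ne_zero c'

lemma exists_untouched_leaf_end (hrep : IsMaxDegRep g rep) {e : Fin t} (he : IsLeafEdge g e) :
    (deg g univ (g e).1 = 1 ∧ deg (starEdges rep c) univ (g e).1 = 0) ∨
      (deg g univ (g e).2 = 1 ∧ deg (starEdges rep c) univ (g e).2 = 0) := by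
  have hother : ∀ x y, adjOn g univ x y → deg g univ x = 1 →
      deg (starEdges rep c) univ x = 0 ∨
        deg g univ y = 1 ∧ deg (starEdges rep c) univ y = 0 := by
    intro x y hxy hx
    by_cases hx' : deg (starEdges rep c) univ x = 0
    · exact .inl hx'
    obtain ⟨c', rfl⟩ := exists_rep_of_deg_starEdges_ne_zero hx'
    obtain ⟨hy, hyrep⟩ := hrep.deg_eq_one_of_adjOn hxy hx
    refine .inr ⟨hy, by_contra fun hy' => ?_⟩
    obtain ⟨c'', hc''⟩ := exists_rep_of_deg_starEdges_ne_zero hy'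
    exact hyrep c'' hc''
  rcases he with h | h
  · rcases hother _ _ ⟨e, mem_univ _, .inl rfl⟩ h with h' | h'
    exacts [.inl ⟨h, h'⟩, .inr h']
  · rcases hother _ _ ⟨e, mem_univ _, .inr rfl⟩ h with h' | h'
    exacts [.inr ⟨h, h'⟩, .inl h']

lemma eqvGen_liftVert_rep_zero (hrep : IsMaxDegRep g rep) {v : Fin (2 * t)}
    (hv : deg g univ v ≠ 0) :
    Relation.EqvGen (adjOn (addEdges g (starEdges rep c)) univ)
      (liftVert z v) (liftVert z (rep (c 0))) := by
  obtain ⟨k, hk⟩ := c.surjective ⟨Quotient.mk _ v, v, rfl, hv⟩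
  have hvk : Relation.EqvGen (adjOn g univ) v (rep (c k)) :=
    Quotient.exact ((hrep (c k)).1.trans (by rw [hk])).symm
  refine (eqvGen_adjOn_addEdges hvk).trans _ _ _ ?_
  induction k using Fin.cases with
  | zero => exact .refl _
  | succ i => exact .rel _ _ (adjOn_addEdges_natAdd i)

end Joining

lemma exists_addEdges_graphParams {t l γ z : ℕ} {g : MG t}
    (hp : GraphParams t l γ (z + 1) g) :
    ∃ new : Fin z → Fin (2 * t) × Fin (2 * t), (∀ v, deg new univ v ≠ 0 → deg g univ v ≠ 0) ∧
      GraphParams (t + z) l γ 1 (addEdges g new) := by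
  obtain ⟨hleaf, hγ, hζ⟩ := hp
  have : Finite (EdgeComponent g) := Subtype.finite
  let c : Fin (z + 1) ≃ EdgeComponent g := (Finite.equivFinOfCardEq hζ).symm
  obtain ⟨rep, hrep⟩ := exists_isMaxDegRep g
  have hnew : ∀ v, deg (starEdges rep c) univ v ≠ 0 → deg g univ v ≠ 0 :=
    fun _ => deg_ne_zero_of_deg_starEdges_ne_zero hrep
  obtain ⟨v, hv⟩ := exists_deg_ne_zero_of_zetaEdge_ne_zero (g := g) (by omega)
  have hconn : zetaEdge (t + z) (addEdges g (starEdges rep c)) = 1 := by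
    refine zetaEdge_eq_one (liftVert z (rep (c 0))) (fun w hw => ?_)
      ⟨_, (deg_addEdges_liftVert_ne_zero_iff hnew).2 hv⟩
    obtain ⟨v, rfl⟩ := exists_liftVert_of_deg_addEdges_ne_zero hw
    exact eqvGen_liftVert_rep_zero hrep ((deg_addEdges_liftVert_ne_zero_iff hnew).1 hw)
  refine ⟨starEdges rep c, hnew, ?_, ?_, hconn⟩
  · rw [leafEdgeCount_addEdges hnew fun e => exists_untouched_leaf_end hrep, hleaf]
  · rw [← hγ, gammaNI, gammaNI, hconn, hζ, nonIsoVerts_addEdges hnew]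
    omega

section Counting

variable {t z l γ ζ : ℕ}

abbrev Graphs (t l γ ζ : ℕ) := {g : MG t // GraphParams t l γ ζ g}

abbrev isoSetoid (t l γ ζ : ℕ) : Setoid (Graphs t l γ ζ) :=
  Relation.EqvGen.setoid fun g₁ g₂ => isoRel t g₁.1 g₂.1

lemma N_eq_card : N t l γ ζ = Nat.card (Quotient (isoSetoid t l γ ζ)) := rfl

lemma isoSetoid_iff {g₁ g₂ : Graphs t l γ ζ} : isoSetoid t l γ ζ g₁ g₂ ↔ isoRel t g₁.1 g₂.1 :=
  ((isoRel_equivalence t).comap Subtype.val).eqvGen_iff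

abbrev NonLeafEdge {T : ℕ} (h : MG T) : Type := {e : Fin T // ¬ IsLeafEdge h e}

lemma card_nonLeafEdge {T : ℕ} (h : MG T) :
    Nat.card (NonLeafEdge h) = T - leafEdgeCount T h := by
  classical
  rw [NonLeafEdge, Nat.card_eq_fintype_card, Fintype.card_subtype_compl, Fintype.card_subtype,
    Fintype.card_fin, leafEdgeCount]
  congr

abbrev Code (t z l γ : ℕ) :=
  Σ C : Quotient (isoSetoid (t + z) l γ 1), Fin z → NonLeafEdge C.out.1

lemma card_code : Nat.card (Code t z l γ) = N (t + z) l γ 1 * (t + z - l) ^ z := by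
  have := Fintype.ofFinite (Quotient (isoSetoid (t + z) l γ 1))
  have hC (C : Quotient (isoSetoid (t + z) l γ 1)) :
      Nat.card (Fin z → NonLeafEdge C.out.1) = (t + z - l) ^ z := by
    rw [Nat.card_fun, card_nonLeafEdge, C.out.2.1, Nat.card_eq_fintype_card, Fintype.card_fin]
  rw [Nat.card_sigma, sum_congr rfl fun C _ => hC C, sum_const, card_univ, smul_eq_mul, N_eq_card,
    Nat.card_eq_fintype_card]

def Decodes (p : Code t z l γ) (g : MG t) : Prop :=
  SubgraphIso g Set.univ p.1.out.1 (Set.range fun i => (p.2 i).1)ᶜ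

lemma exists_decodes {g : MG t} (hp : GraphParams t l γ (z + 1) g) :
    ∃ p : Code t z l γ, Decodes p g := by
  obtain ⟨new, hnew, hp'⟩ := exists_addEdges_graphParams hp
  set C := Quotient.mk (isoSetoid (t + z) l γ 1) ⟨addEdges g new, hp'⟩
  obtain ⟨σ, hσ, hσleaf⟩ :=
    exists_perm_of_isoRel ((isoRel_equivalence _).symm (isoSetoid_iff.1 (Quotient.mk_out _)))
  refine ⟨⟨C, fun i => ⟨σ (Fin.natAdd t i), (hσleaf _).not.2
    (not_isLeafEdge_addEdges_natAdd hnew i)⟩⟩, ?_⟩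
  have hrange : σ '' (Set.range (Fin.natAdd t))ᶜ = (Set.range fun i => σ (Fin.natAdd t i))ᶜ := by
    rw [Set.image_compl_eq σ.bijective, ← Set.range_comp]
    rfl
  exact subgraphIso_addEdges.trans (hrange ▸ hσ _)

lemma isoRel_of_decodes (ht : 0 < t) {p : Code t z l γ} {g₁ g₂ : MG t}
    (h₁ : Decodes p g₁) (h₂ : Decodes p g₂) : isoRel t g₁ g₂ :=
  have : Nonempty (Fin t) := ⟨⟨0, ht⟩⟩
  have : Nonempty (Fin (2 * t)) := ⟨⟨0, by omega⟩⟩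
  isoRel_of_subgraphIso_univ (h₁.trans h₂.symm)

end Counting

end CuckooStash

/-- `N(t, l, γ, ζ) ≤ N(t + ζ - 1, l, γ, 1) · (t - l + ζ - 1)^(ζ - 1)`:
every graph with `ζ` components arises from a connected graph with the same number of
leaf edges and cyclomatic number and `t + ζ - 1` edges by removing `ζ - 1` non-leaf,
non-cycle edges. -/
theorem stmt_13 (t l γ ζ : ℕ) (hζ : 1 ≤ ζ) (hl : l ≤ t) :
    N t l γ ζ ≤ N (t + ζ - 1) l γ 1 * (t - l + ζ - 1) ^ (ζ - 1) := by
  obtain ⟨z, rfl⟩ : ∃ z, ζ = z + 1 := ⟨ζ - 1, by omega⟩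
  rw [Nat.add_sub_cancel, Nat.add_succ_sub_one, Nat.add_succ_sub_one,
    show t - l + z = t + z - l by omega, ← card_code (t := t), N_eq_card]
  refine Nat.card_quotient_le_of_forall_exists _ (fun p g => Decodes p g.1)
    (fun g => exists_decodes g.2)
    fun p g₁ g₂ h₁ h₂ => isoSetoid_iff.2 (isoRel_of_decodes ?_ h₁ h₂)
  exact pos_of_zetaEdge_ne_zero (g := g₁.1) (by rw [g₁.2.2.2]; omega)
end

section
/- The series Σ_{t≥1} t^C / (1+ε)^t converges for every constant C ≥ 0 and ε > 0; consequently Σ_{t=2k}^{n} C(n,t) · (t! · t^C / m^{t-1}) · (t²/ℓ)^{ck} = O(n/ℓ^{ck}) when m ≥ (1+ε)n. -/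
/-!
Since `C(n,t) · t! ≤ n^t` and `m ≥ (1+ε) n`, the `t`-th term is at most
`(1+ε) · t^(C+2ck) / (1+ε)^t · n / ℓ^(ck)`. The series `∑ t^(C+2ck) / (1+ε)^t` converges
(a polynomial times a geometric sequence), so its sum bounds the whole expression
uniformly in `n`, `m` and `ℓ`.
-/

lemma summable_pow_div_pow_of_one_lt (D : ℕ) {a : ℝ} (ha : 1 < a) :
    Summable (fun t : ℕ => (t : ℝ) ^ D / a ^ t) := by
  have hnorm : ‖a⁻¹‖ < 1 := by
    rw [norm_inv, Real.norm_of_nonneg (by linarith)]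
    exact inv_lt_one_of_one_lt₀ ha
  simpa [div_eq_mul_inv] using summable_pow_mul_geometric_of_norm_lt_one D hnorm

lemma pow_div_pow_pred_le {x y a : ℝ} (hx : 1 ≤ x) (ha : 1 ≤ a) (hxy : a * x ≤ y) (t : ℕ) :
    x ^ t / y ^ (t - 1) ≤ a * x / a ^ t := by
  rcases t with _ | t
  · simp only [pow_zero, zero_tsub, div_one]
    nlinarith
  · calc x ^ (t + 1) / y ^ (t + 1 - 1) = x * x ^ t / y ^ t := by
          rw [Nat.add_sub_cancel, pow_succ']
      _ ≤ x * x ^ t / (a * x) ^ t := by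
          gcongr
      _ = a * x / a ^ (t + 1) := by
          field_simp
          ring

lemma choose_mul_factorial_div_pow_le (n m t C j : ℕ) {a ℓ : ℝ} (ha : 1 ≤ a) (hℓ : 0 ≤ ℓ)
    (hn : 1 ≤ n) (hm : a * n ≤ m) :
    (n.choose t : ℝ) * t.factorial * (t : ℝ) ^ C / (m : ℝ) ^ (t - 1) * ((t : ℝ) ^ 2 / ℓ) ^ j
      ≤ a * ((t : ℝ) ^ (C + 2 * j) / a ^ t) * (n / ℓ ^ j) := by
  have hchoose : (n.choose t : ℝ) * t.factorial ≤ (n : ℝ) ^ t :=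
    (le_div_iff₀ (mod_cast t.factorial_pos)).1 (Nat.choose_le_pow_div t n)
  set w := (t : ℝ) ^ C * ((t : ℝ) ^ 2 / ℓ) ^ j with hw
  calc (n.choose t : ℝ) * t.factorial * (t : ℝ) ^ C / (m : ℝ) ^ (t - 1) * ((t : ℝ) ^ 2 / ℓ) ^ j
      = (n.choose t : ℝ) * t.factorial / (m : ℝ) ^ (t - 1) * w := by ring
    _ ≤ (n : ℝ) ^ t / (m : ℝ) ^ (t - 1) * w := by gcongr
    _ ≤ a * n / a ^ t * w := by
        gcongr ?_ * _
        exact pow_div_pow_pred_le (mod_cast hn) ha hm t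
    _ = a * ((t : ℝ) ^ (C + 2 * j) / a ^ t) * (n / ℓ ^ j) := by
        rw [hw, div_pow, ← pow_mul, pow_add]
        ring

theorem stmt_17_general (C c k : ℕ) (ε : ℝ) (hε : 0 < ε) :
    Summable (fun t : ℕ => (t : ℝ) ^ C / (1 + ε) ^ t) ∧
    ∃ K : ℝ, 0 < K ∧ ∀ n m ℓ : ℕ, 1 ≤ n → 1 ≤ ℓ → (1 + ε) * (n : ℝ) ≤ (m : ℝ) →
      ∑ t ∈ Finset.Icc (2 * k) n,
          (n.choose t : ℝ) * (Nat.factorial t : ℝ) * (t : ℝ) ^ C / (m : ℝ) ^ (t - 1)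
            * ((t : ℝ) ^ 2 / (ℓ : ℝ)) ^ (c * k)
        ≤ K * (n : ℝ) / (ℓ : ℝ) ^ (c * k) := by
  have h1ε : (1 : ℝ) < 1 + ε := by linarith
  set D := C + 2 * (c * k)
  have hsum := summable_pow_div_pow_of_one_lt D h1ε
  set S := ∑' t : ℕ, (t : ℝ) ^ D / (1 + ε) ^ t
  have hS : 0 < S := hsum.tsum_pos (fun t => by positivity) 1 (by positivity)
  refine ⟨summable_pow_div_pow_of_one_lt C h1ε, (1 + ε) * S, by positivity,
    fun n m ℓ hn _ hm => ?_⟩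
  calc _ ≤ ∑ t ∈ Finset.Icc (2 * k) n,
          (1 + ε) * ((t : ℝ) ^ D / (1 + ε) ^ t) * (n / (ℓ : ℝ) ^ (c * k)) :=
        Finset.sum_le_sum fun t _ =>
          choose_mul_factorial_div_pow_le n m t C (c * k) h1ε.le (Nat.cast_nonneg ℓ) hn hm
    _ = (1 + ε) * (∑ t ∈ Finset.Icc (2 * k) n, (t : ℝ) ^ D / (1 + ε) ^ t)
          * (n / (ℓ : ℝ) ^ (c * k)) := by
        rw [← Finset.sum_mul, ← Finset.mul_sum]
    _ ≤ (1 + ε) * S * (n / (ℓ : ℝ) ^ (c * k)) := by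
        gcongr
        exact hsum.sum_le_tsum _ fun t _ => by positivity
    _ = (1 + ε) * S * n / (ℓ : ℝ) ^ (c * k) := mul_div_assoc' _ _ _

/-- The series `∑_{t≥1} t^C / (1+ε)^t` converges for every constant `C ≥ 0` and
`ε > 0`; consequently, for constants `c, k ≥ 1`,
`∑_{t=2k}^{n} C(n,t) · t! · t^C / m^(t-1) · (t²/ℓ)^(ck) = O(n/ℓ^(ck))`
whenever `m ≥ (1+ε)n` (the constant `K` depends only on `C, c, k, ε`). -/
theorem stmt_17 (C c k : ℕ) (hc : 1 ≤ c) (hk : 1 ≤ k) (ε : ℝ) (hε : 0 < ε) :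
    Summable (fun t : ℕ => (t : ℝ) ^ C / (1 + ε) ^ t) ∧
    ∃ K : ℝ, 0 < K ∧ ∀ n m ℓ : ℕ, 1 ≤ n → 1 ≤ ℓ → (1 + ε) * (n : ℝ) ≤ (m : ℝ) →
      ∑ t ∈ Finset.Icc (2 * k) n,
          (n.choose t : ℝ) * (Nat.factorial t : ℝ) * (t : ℝ) ^ C / (m : ℝ) ^ (t - 1)
            * ((t : ℝ) ^ 2 / (ℓ : ℝ)) ^ (c * k)
        ≤ K * (n : ℝ) / (ℓ : ℝ) ^ (c * k) :=
  stmt_17_general C c k ε hε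
end
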